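/- For every F ∈ L²_ν(X;Y) and ν-almost every a ∈ X, ∫_Θ ( ∫_X ⟨F(a'), φ(a',θ)⟩_Y dν(a') ) φ(a,θ) dμ(θ) = ∫_X ( ∫_Θ ⟨φ(a',θ), F(a')⟩_Y φ(a,θ) dμ(θ) ) dν(a'), where all integrals are well-defined Bochner integrals. In other words, A A* F = T_{k_μ} F, so the operator A is a square root of the kernel integral operator T_{k_μ}. -/

import Mathlib

/-!
Since `φ ∈ L²(ν × μ)`, almost every section `φ(a, ·)` lies in `L²(μ)`. For such `a`, the integrand
`(a', θ) ↦ ⟪φ(a', θ), F a'⟫ • φ(a, θ)` is dominated by `‖φ(a', θ)‖ · (‖F a'‖ ‖φ(a, θ)‖)`, a product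
of two functions in `L²(ν × μ)`, hence is integrable on `X × Θ` by Cauchy–Schwarz. Fubini's theorem
then gives all the integrability claims and lets the two iterated integrals be swapped.
-/

open MeasureTheory
open scoped InnerProductSpace

namespace MeasureTheory

variable {α β E : Type*} [MeasurableSpace α] [MeasurableSpace β] {μ : Measure α} {ν : Measure β}
  [NormedAddCommGroup E]

theorem MemLp.ae_memLp_two_prodMk [SFinite μ] [SFinite ν] {f : α × β → E} (hf : MemLp f 2 (μ.prod ν)) :
    ∀ᵐ x ∂μ, MemLp (fun y => f (x, y)) 2 ν := by
  have hsq := (memLp_two_iff_integrable_sq_norm hf.1).mp hf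
  filter_upwards [hf.1.prodMk_left, hsq.prod_right_ae] with x hmeas hint
  exact (memLp_two_iff_integrable_sq_norm hmeas).mpr hint

theorem MemLp.two_mul_prod {f : α → ℝ} {g : β → ℝ} (hf : MemLp f 2 μ)
    (hg : MemLp g 2 ν) : MemLp (fun p : α × β => f p.1 * g p.2) 2 (μ.prod ν) := by
  refine (memLp_two_iff_integrable_sq (hf.1.comp_fst.mul hg.1.comp_snd)).mpr ?_
  simpa only [Pi.mul_apply, mul_pow] using
    ((memLp_two_iff_integrable_sq hf.1).mp hf).mul_prod ((memLp_two_iff_integrable_sq hg.1).mp hg)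

theorem integrable_inner_smul_of_memLp_two [SFinite ν] [InnerProductSpace ℝ E]
    {G : Type*} [NormedAddCommGroup G] [NormedSpace ℝ G]
    {φ : α × β → E} {f : α → E} {g : β → G}
    (hφ : MemLp φ 2 (μ.prod ν)) (hf : MemLp f 2 μ) (hg : MemLp g 2 ν) :
    Integrable (fun p : α × β => ⟪φ p, f p.1⟫_ℝ • g p.2) (μ.prod ν) := by
  have hbound : Integrable (fun p : α × β => ‖φ p‖ * (‖f p.1‖ * ‖g p.2‖)) (μ.prod ν) :=
    hφ.norm.integrable_mul (hf.norm.two_mul_prod hg.norm)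
  refine hbound.mono' ((hφ.1.inner hf.1.comp_fst).smul hg.1.comp_snd) (.of_forall fun p => ?_)
  calc ‖⟪φ p, f p.1⟫_ℝ • g p.2‖ = |⟪φ p, f p.1⟫_ℝ| * ‖g p.2‖ := by
        rw [norm_smul, Real.norm_eq_abs]
    _ ≤ ‖φ p‖ * ‖f p.1‖ * ‖g p.2‖ := by gcongr; exact abs_real_inner_le_norm _ _
    _ = ‖φ p‖ * (‖f p.1‖ * ‖g p.2‖) := mul_assoc _ _ _

end MeasureTheory

theorem statement2_general
    {X Θ Y : Type*} [MeasurableSpace X] [MeasurableSpace Θ]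
    [NormedAddCommGroup Y] [InnerProductSpace ℝ Y]
    [CompleteSpace Y]
    (ν : Measure X) (μ : Measure Θ)
    [IsProbabilityMeasure ν] [IsProbabilityMeasure μ]
    (φ : X × Θ → Y)
    (hφ : MemLp φ 2 (ν.prod μ)) :
    ∀ F : X → Y, MemLp F 2 ν →
      ∀ᵐ a ∂ν,
        Integrable (fun θ => (∫ a', ⟪F a', φ (a', θ)⟫_ℝ ∂ν) • φ (a, θ)) μ ∧
        Integrable (fun a' => ∫ θ, ⟪φ (a', θ), F a'⟫_ℝ • φ (a, θ) ∂μ) ν ∧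
        (∀ᵐ a' ∂ν, Integrable (fun θ => ⟪φ (a', θ), F a'⟫_ℝ • φ (a, θ)) μ) ∧
        ∫ θ, (∫ a', ⟪F a', φ (a', θ)⟫_ℝ ∂ν) • φ (a, θ) ∂μ
          = ∫ a', (∫ θ, ⟪φ (a', θ), F a'⟫_ℝ • φ (a, θ) ∂μ) ∂ν := by
  intro F hF
  filter_upwards [hφ.ae_memLp_two_prodMk] with a ha
  have hint := integrable_inner_smul_of_memLp_two hφ hF ha
  have hpull : (fun θ => (∫ a', ⟪F a', φ (a', θ)⟫_ℝ ∂ν) • φ (a, θ))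
      = fun θ => ∫ a', ⟪φ (a', θ), F a'⟫_ℝ • φ (a, θ) ∂ν := by
    simp_rw [integral_smul_const, real_inner_comm]
  rw [hpull]
  exact ⟨hint.integral_prod_right, hint.integral_prod_left, hint.prod_right_ae,
    (integral_integral_swap hint).symm⟩

/-- For every `F ∈ L²_ν(X;Y)` and ν-almost every `a ∈ X`,
`∫_Θ (∫_X ⟨F(a'), φ(a',θ)⟩ dν(a')) φ(a,θ) dμ(θ)
  = ∫_X (∫_Θ ⟨φ(a',θ), F(a')⟩ φ(a,θ) dμ(θ)) dν(a')`,
with all integrals well-defined Bochner integrals; i.e. `A A* F = T_{k_μ} F`,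
so `A` is a square root of the kernel integral operator `T_{k_μ}`. -/
theorem statement2
    {X Θ Y : Type*} [MeasurableSpace X] [MeasurableSpace Θ]
    [NormedAddCommGroup Y] [InnerProductSpace ℝ Y]
    [CompleteSpace Y] [SecondCountableTopology Y]
    (ν : Measure X) (μ : Measure Θ)
    [IsProbabilityMeasure ν] [IsProbabilityMeasure μ]
    (φ : X × Θ → Y)
    (hφ : MemLp φ 2 (ν.prod μ)) :
    ∀ F : X → Y, MemLp F 2 ν →
      ∀ᵐ a ∂ν,
        Integrable (fun θ => (∫ a', ⟪F a', φ (a', θ)⟫_ℝ ∂ν) • φ (a, θ)) μ ∧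
        Integrable (fun a' => ∫ θ, ⟪φ (a', θ), F a'⟫_ℝ • φ (a, θ) ∂μ) ν ∧
        (∀ᵐ a' ∂ν, Integrable (fun θ => ⟪φ (a', θ), F a'⟫_ℝ • φ (a, θ)) μ) ∧
        ∫ θ, (∫ a', ⟪F a', φ (a', θ)⟫_ℝ ∂ν) • φ (a, θ) ∂μ
          = ∫ a', (∫ θ, ⟪φ (a', θ), F a'⟫_ℝ • φ (a, θ) ∂μ) ∂ν :=
  statement2_general ν μ φ hφ
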